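/- arXiv:1309.1028 — 2 statements merged into one kernel-verified Lean document; each statement's English description precedes it below -/
import Mathlib

section
/- Let n be a positive integer and ε ≠ 0. Suppose φ : ℝ → ℝ is three times differentiable and satisfies the ODE ε φ'''(ω) + (φ(ω)ⁿ − ω/3) φ'(ω) + (1/(3n)) φ(ω) = 0 for all ω ∈ ℝ. Then u(t,x) = e^(t/(3n)) φ( x e^(−t/3) ) satisfies u_t + uⁿ u_x + ε e^t u_{xxx} = 0 for all (t,x) ∈ ℝ × ℝ. -/
/-- Partial derivative in `t` of `u = u(t,x)`. -/
noncomputable def pt (u : ℝ → ℝ → ℝ) (t x : ℝ) : ℝ := deriv (fun s => u s x) t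
/-- Partial derivative in `x` of `u = u(t,x)`. -/
noncomputable def px (u : ℝ → ℝ → ℝ) (t x : ℝ) : ℝ := deriv (fun y => u t y) x
/-- Third partial derivative in `x` of `u = u(t,x)`. -/
noncomputable def pxxx (u : ℝ → ℝ → ℝ) (t x : ℝ) : ℝ := iteratedDeriv 3 (fun y => u t y) x

/-! The `x`-derivatives of `e^{at} φ(e^{bt} x)` are those of `φ`, rescaled by powers of `e^{bt}`,
and the chain rule in `t` gives `e^{at} (a φ + b ω φ')` with `ω = e^{bt} x`. For `a = 1/(3n)` and
`b = -1/3` the exponential weights in front of `uⁿ u_x` and `ε e^t u_xxx` are both `1`, so the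
left-hand side of the PDE is `e^{t/(3n)}` times the left-hand side of the ODE at `ω`. -/

open Real

theorem iteratedDeriv_comp_const_mul_field {𝕜 F : Type*} [NontriviallyNormedField 𝕜]
    [NormedAddCommGroup F] [NormedSpace 𝕜 F] (n : ℕ) (f : 𝕜 → F) (c : 𝕜) :
    iteratedDeriv n (fun x => f (c * x)) = fun x => c ^ n • iteratedDeriv n f (c * x) := by
  induction n with
  | zero => simp
  | succ n ih =>
    funext x
    rw [iteratedDeriv_succ, ih, deriv_fun_const_smul_field, iteratedDeriv_succ,
      deriv_comp_mul_left, smul_smul, pow_succ]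

noncomputable def similarityAnsatz (a b : ℝ) (φ : ℝ → ℝ) (t x : ℝ) : ℝ :=
  exp (a * t) * φ (exp (b * t) * x)

section similarityAnsatz

variable (a b : ℝ) (φ : ℝ → ℝ) (t x : ℝ)

theorem px_similarityAnsatz :
    px (similarityAnsatz a b φ) t x = exp (a * t) * exp (b * t) * deriv φ (exp (b * t) * x) := by
  simp only [px, similarityAnsatz, deriv_const_mul_field, deriv_comp_mul_left, smul_eq_mul]
  ring

theorem pxxx_similarityAnsatz :
    pxxx (similarityAnsatz a b φ) t x =
      exp (a * t) * exp (b * t) ^ 3 * deriv (deriv (deriv φ)) (exp (b * t) * x) := by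
  simp only [pxxx, similarityAnsatz, iteratedDeriv_const_mul_field,
    iteratedDeriv_comp_const_mul_field, smul_eq_mul]
  rw [iteratedDeriv_eq_iterate, mul_assoc]
  rfl

theorem pt_similarityAnsatz (hφ : DifferentiableAt ℝ φ (exp (b * t) * x)) :
    pt (similarityAnsatz a b φ) t x = exp (a * t) *
      (a * φ (exp (b * t) * x) + b * (exp (b * t) * x) * deriv φ (exp (b * t) * x)) := by
  have hscale : HasDerivAt (fun s => exp (b * s) * x) (exp (b * t) * b * x) t :=
    (((hasDerivAt_id' t).const_mul b).exp.mul_const x).congr_deriv (by ring)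
  have hamp : HasDerivAt (fun s => exp (a * s)) (exp (a * t) * a) t :=
    ((hasDerivAt_id' t).const_mul a).exp.congr_deriv (by ring)
  exact (hamp.mul (hφ.hasDerivAt.comp t hscale)).deriv.trans (by rw [Function.comp_apply]; ring)

end similarityAnsatz

theorem stmt_9_general (n : ℕ) (hn : 0 < n) (ε : ℝ)
    (φ : ℝ → ℝ) (hφ1 : Differentiable ℝ φ)
    (hode : ∀ ω : ℝ, ε * deriv (deriv (deriv φ)) ω
      + (φ ω ^ n - ω / 3) * deriv φ ω + 1 / (3 * (n:ℝ)) * φ ω = 0)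
    (u : ℝ → ℝ → ℝ)
    (hu : ∀ t x, u t x = Real.exp (t / (3 * (n:ℝ))) * φ (x * Real.exp (-t / 3))) :
    ∀ t x : ℝ,
      pt u t x + (u t x) ^ n * px u t x + ε * Real.exp t * pxxx u t x = 0 := by
  obtain rfl : u = similarityAnsatz (1 / (3 * n)) (-1 / 3) φ := by
    funext t x
    rw [hu, similarityAnsatz, mul_comm x]
    ring_nf
  intro t x
  rw [pt_similarityAnsatz _ _ _ _ _ (hφ1 _), px_similarityAnsatz, pxxx_similarityAnsatz,
    similarityAnsatz]
  set A := exp (1 / (3 * n) * t)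
  set K := exp (-1 / 3 * t)
  set ω := K * x
  have hamp_pow : A ^ n = exp (t / 3) := by
    rw [← exp_nat_mul]
    field_simp
  have hux_weight : exp (t / 3) * K = 1 := by
    rw [← exp_add]; ring_nf; exact exp_zero
  have huxxx_weight : exp t * K ^ 3 = 1 := by
    rw [← exp_nat_mul, ← exp_add]; push_cast; ring_nf; exact exp_zero
  linear_combination A * hode ω + A * φ ω ^ n * K * deriv φ ω * hamp_pow
    + A * φ ω ^ n * deriv φ ω * hux_weight + ε * A * deriv (deriv (deriv φ)) ω * huxxx_weight

/-- Case 3 of Table 4: a solution of the reduced ODE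
`ε φ''' + (φⁿ − ω/3) φ' + (1/(3n)) φ = 0` gives, via the ansatz
`u = e^{t/(3n)} φ(x e^{−t/3})`, a solution of `u_t + uⁿ u_x + ε e^t u_{xxx} = 0`. -/
theorem stmt_9 (n : ℕ) (hn : 0 < n) (ε : ℝ) (hε : ε ≠ 0)
    (φ : ℝ → ℝ) (hφ1 : Differentiable ℝ φ) (hφ2 : Differentiable ℝ (deriv φ))
    (hφ3 : Differentiable ℝ (deriv (deriv φ)))
    (hode : ∀ ω : ℝ, ε * deriv (deriv (deriv φ)) ω
      + (φ ω ^ n - ω / 3) * deriv φ ω + 1 / (3 * (n:ℝ)) * φ ω = 0)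
    (u : ℝ → ℝ → ℝ)
    (hu : ∀ t x, u t x = Real.exp (t / (3 * (n:ℝ))) * φ (x * Real.exp (-t / 3))) :
    ∀ t x : ℝ,
      pt u t x + (u t x) ^ n * px u t x + ε * Real.exp t * pxxx u t x = 0 :=
  stmt_9_general n hn ε φ hφ1 hode u hu
end

section
/- Let n be a positive integer and ε ≠ 0. Suppose φ : ℝ → ℝ is three times differentiable and satisfies the ODE ε φ'''(ω) + (φ(ω)ⁿ − ω/3) φ'(ω) − (2/(3n)) φ(ω) = 0 for all ω ∈ ℝ. Then u(t,x) = t^(−2/(3n)) φ( x t^(−1/3) ) satisfies u_t + uⁿ u_x + ε u_{xxx} = 0 for all t > 0 and x ∈ ℝ. -/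
theorem iteratedDeriv_comp_mul_left {𝕜 F : Type*} [NontriviallyNormedField 𝕜]
    [NormedAddCommGroup F] [NormedSpace 𝕜 F] (k : ℕ) (c : 𝕜) (f : 𝕜 → F) :
    iteratedDeriv k (fun y => f (c * y)) = fun y => c ^ k • iteratedDeriv k f (c * y) := by
  induction k with
  | zero => simp
  | succ k ih =>
    funext y
    rw [iteratedDeriv_succ, ih, deriv_fun_const_smul_field,
      deriv_comp_mul_left c (iteratedDeriv k f), iteratedDeriv_succ, smul_smul, pow_succ]

theorem hasDerivAt_rpow_mul_comp_mul_rpow {φ : ℝ → ℝ} {t : ℝ} (ht : 0 < t) (x α β : ℝ)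
    (hφ : DifferentiableAt ℝ φ (x * t ^ β)) :
    HasDerivAt (fun s => s ^ α * φ (x * s ^ β))
      (t ^ (α - 1) * (α * φ (x * t ^ β) + β * (x * t ^ β) * deriv φ (x * t ^ β))) t := by
  have hpow (γ : ℝ) : HasDerivAt (fun s : ℝ => s ^ γ) (γ * t ^ (γ - 1)) t :=
    Real.hasDerivAt_rpow_const (Or.inl ht.ne')
  refine ((hpow α).mul (hφ.hasDerivAt.comp t ((hpow β).const_mul x))).congr_deriv ?_
  rw [Function.comp_apply, Real.rpow_sub_one ht.ne', Real.rpow_sub_one ht.ne']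
  field_simp

theorem stmt_11_general (n : ℕ) (hn : 0 < n) (ε : ℝ)
    (φ : ℝ → ℝ) (hφ1 : Differentiable ℝ φ)
    (hode : ∀ ω : ℝ, ε * deriv (deriv (deriv φ)) ω
      + (φ ω ^ n - ω / 3) * deriv φ ω - 2 / (3 * (n:ℝ)) * φ ω = 0)
    (u : ℝ → ℝ → ℝ)
    (hu : ∀ t x, u t x = t ^ (-2 / (3 * (n:ℝ))) * φ (x * t ^ (-(1:ℝ) / 3))) :
    ∀ t, 0 < t → ∀ x : ℝ,
      pt u t x + (u t x) ^ n * px u t x + ε * pxxx u t x = 0 := by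
  intro t ht x
  set α : ℝ := -2 / (3 * (n:ℝ))
  set c : ℝ := t ^ (-(1:ℝ) / 3)
  have hux : (fun y => u t y) = fun y => t ^ α * φ (c * y) := by
    funext y; rw [hu, mul_comm y]
  have hpt : pt u t x = t ^ (α - 1) * (α * φ (x * c) + -(1:ℝ) / 3 * (x * c) * deriv φ (x * c)) := by
    simp only [pt, hu]
    exact (hasDerivAt_rpow_mul_comp_mul_rpow ht x α _ (hφ1 _)).deriv
  have hpx : px u t x = t ^ α * c * deriv φ (x * c) := by
    rw [px, hux, deriv_const_mul_field, deriv_comp_mul_left, smul_eq_mul, mul_comm c x, mul_assoc]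
  have hpxxx : pxxx u t x = t ^ α * c ^ 3 * deriv (deriv (deriv φ)) (x * c) := by
    rw [pxxx, hux, iteratedDeriv_const_mul_field, iteratedDeriv_comp_mul_left,
      iteratedDeriv_eq_iterate]
    simp only [Function.iterate_succ, Function.iterate_zero, Function.comp_apply, id, smul_eq_mul,
      mul_comm c x, mul_assoc]
  have hc3 : c ^ 3 = t⁻¹ := by
    rw [← Real.rpow_natCast, ← Real.rpow_mul ht.le]
    norm_num [Real.rpow_neg_one]
  have hun : (t ^ α) ^ n = c ^ 2 := by
    have hn' : (n : ℝ) ≠ 0 := by exact_mod_cast hn.ne'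
    rw [← Real.rpow_natCast, ← Real.rpow_natCast, ← Real.rpow_mul ht.le, ← Real.rpow_mul ht.le]
    congr 1
    simp only [α]
    field_simp
    ring
  have hα1 : t ^ (α - 1) = t ^ α * c ^ 3 := by
    rw [Real.rpow_sub_one ht.ne', hc3, div_eq_mul_inv]
  rw [hpt, hpx, hpxxx, hu, mul_pow, hun, hα1]
  linear_combination t ^ α * c ^ 3 * hode (x * c)

/-- Case 5 of Table 4: a solution of the reduced ODE
`ε φ''' + (φⁿ − ω/3) φ' − (2/(3n)) φ = 0` gives, via the ansatz
`u = t^{−2/(3n)} φ(x t^{−1/3})`, a solution of `u_t + uⁿ u_x + ε u_{xxx} = 0`. -/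
theorem stmt_11 (n : ℕ) (hn : 0 < n) (ε : ℝ) (hε : ε ≠ 0)
    (φ : ℝ → ℝ) (hφ1 : Differentiable ℝ φ) (hφ2 : Differentiable ℝ (deriv φ))
    (hφ3 : Differentiable ℝ (deriv (deriv φ)))
    (hode : ∀ ω : ℝ, ε * deriv (deriv (deriv φ)) ω
      + (φ ω ^ n - ω / 3) * deriv φ ω - 2 / (3 * (n:ℝ)) * φ ω = 0)
    (u : ℝ → ℝ → ℝ)
    (hu : ∀ t x, u t x = t ^ (-2 / (3 * (n:ℝ))) * φ (x * t ^ (-(1:ℝ) / 3))) :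
    ∀ t, 0 < t → ∀ x : ℝ,
      pt u t x + (u t x) ^ n * px u t x + ε * pxxx u t x = 0 :=
  stmt_11_general n hn ε φ hφ1 hode u hu
end
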